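/- Let Π be a profinite group such that every finite embedding problem for Π has a proper solution. Then every non-trivial finite embedding problem for Π has infinitely many proper solutions; if moreover the set of open normal subgroups of Π is countably infinite, then every non-trivial finite embedding problem for Π has exactly countably infinitely many proper solutions. -/

import Mathlib

/-!
Apply the hypothesis to the embedding problem for `α` and the projection `Γ ×_G ⋯ ×_G Γ → G`
from the `(n+1)`-fold fibre power of `f`. The coordinates of a proper solution are `n + 1`
proper solutions of `(α, f)`, pairwise distinct because the solution is surjective: it hits the
tuple with a non-trivial element of `ker f` in coordinate `i` and `1` in all others.
For countability: a continuous homomorphism to a finite group has an open normal kernel `H`, and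
only finitely many homomorphisms to `Γ` have kernel `H`, as `P ⧸ H` then embeds in `Γ`.
-/

open Cardinal

universe u

/-- Continuity of a map into a set carrying the discrete topology. -/
def ContinuousToDiscrete {A B : Type*} [TopologicalSpace A] (f : A → B) : Prop :=
  ∀ s : Set B, IsOpen (f ⁻¹' s)

theorem ContinuousToDiscrete.comp {A B C : Type*} [TopologicalSpace A] {f : A → B}
    (hf : ContinuousToDiscrete f) (g : B → C) : ContinuousToDiscrete (g ∘ f) :=
  fun s => hf (g ⁻¹' s)

theorem ContinuousToDiscrete.isOpen_ker {A B : Type*} [Group A] [TopologicalSpace A] [Group B]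
    {l : A →* B} (hl : ContinuousToDiscrete l) : IsOpen (l.ker : Set A) :=
  hl {1}

section FiberProduct

variable {G Γ : Type*} [Group G] [Group Γ]

def fiberProduct (f : Γ →* G) (ι : Type*) : Subgroup (ι → Γ) where
  carrier := {x | ∀ i j, f (x i) = f (x j)}
  one_mem' _ _ := by simp only [Pi.one_apply, map_one]
  mul_mem' ha hb i j := by simp only [Pi.mul_apply, map_mul, ha i j, hb i j]
  inv_mem' ha i j := by simp only [Pi.inv_apply, map_inv, ha i j]

namespace fiberProduct

variable (f : Γ →* G) {ι : Type*}

def eval (i : ι) : fiberProduct f ι →* Γ :=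
  (Pi.evalMonoidHom (fun _ => Γ) i).comp (fiberProduct f ι).subtype

theorem const_mem (γ : Γ) : (fun _ => γ) ∈ fiberProduct f ι :=
  fun _ _ => rfl

theorem mulSingle_mem [DecidableEq ι] {k : Γ} (hk : k ∈ f.ker) (i : ι) :
    Pi.mulSingle i k ∈ fiberProduct f ι := by
  have hf : ∀ j, f ((Pi.mulSingle i k : ι → Γ) j) = 1 := by
    intro j
    rcases eq_or_ne j i with rfl | hj
    · rwa [Pi.mulSingle_eq_same]
    · rw [Pi.mulSingle_eq_of_ne hj, map_one]
  exact fun j j' => (hf j).trans (hf j').symm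

theorem eval_surjective (i : ι) : Function.Surjective (eval f i) :=
  fun γ => ⟨⟨_, const_mem f γ⟩, rfl⟩

theorem comp_eval_eq (i j : ι) : f.comp (eval f i) = f.comp (eval f j) :=
  MonoidHom.ext fun x => x.2 i j

theorem injective_eval_comp {P : Type*} [Group P] (hker : f.ker ≠ ⊥)
    {l : P →* fiberProduct f ι} (hl : Function.Surjective l) :
    Function.Injective fun i => (eval f i).comp l := by
  classical
  obtain ⟨⟨k, hk⟩, hk1⟩ := Subgroup.ne_bot_iff_exists_ne_one.mp hker
  intro i j hij
  by_contra hne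
  obtain ⟨x, hx⟩ := hl ⟨_, mulSingle_mem f hk i⟩
  have hx_ij : (l x).1 i = (l x).1 j := DFunLike.congr_fun hij x
  rw [hx] at hx_ij
  change (Pi.mulSingle i k : ι → Γ) i = (Pi.mulSingle i k : ι → Γ) j at hx_ij
  rw [Pi.mulSingle_eq_same, Pi.mulSingle_eq_of_ne (Ne.symm hne)] at hx_ij
  exact hk1 (Subtype.ext hx_ij)

end fiberProduct

end FiberProduct

section ProperSolution

variable {P G Γ : Type*} [Group P] [TopologicalSpace P] [Group G] [Group Γ]

def IsProperSolution (α : P →* G) (f : Γ →* G) (l : P →* Γ) : Prop :=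
  ContinuousToDiscrete l ∧ Function.Surjective l ∧ f.comp l = α

theorem IsProperSolution.eval_comp {α : P →* G} {f : Γ →* G} {ι : Type*} {i₀ : ι}
    {l : P →* fiberProduct f ι} (hl : IsProperSolution α (f.comp (fiberProduct.eval f i₀)) l)
    (i : ι) : IsProperSolution α f ((fiberProduct.eval f i).comp l) := by
  obtain ⟨hlc, hls, hlα⟩ := hl
  refine ⟨hlc.comp (fiberProduct.eval f i), (fiberProduct.eval_surjective f i).comp hls, ?_⟩
  rw [← MonoidHom.comp_assoc, fiberProduct.comp_eval_eq f i i₀, hlα]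

theorem infinite_setOf_isProperSolution {α : P →* G} {f : Γ →* G} (hker : f.ker ≠ ⊥)
    (hsol : ∀ n : ℕ, ∃ l : P →* fiberProduct f (Fin (n + 1)),
      IsProperSolution α (f.comp (fiberProduct.eval f 0)) l) :
    {l : P →* Γ | IsProperSolution α f l}.Infinite := by
  intro hfin
  have := hfin.to_subtype
  obtain ⟨l, hl⟩ := hsol (Nat.card {l : P →* Γ | IsProperSolution α f l})
  have hinj := fiberProduct.injective_eval_comp f hker hl.2.1
  have hcard := Nat.card_le_card_of_injective (fun i => (⟨_, hl.eval_comp i⟩ :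
    {l : P →* Γ | IsProperSolution α f l})) fun i j hij => hinj (congrArg Subtype.val hij)
  rw [Nat.card_fin] at hcard
  exact Nat.not_succ_le_self _ hcard

end ProperSolution

theorem MonoidHom.finite_setOf_ker_eq {P Γ : Type*} [Group P] [Group Γ] [Finite Γ]
    (H : Subgroup P) : {l : P →* Γ | l.ker = H}.Finite := by
  rcases Set.eq_empty_or_nonempty {l : P →* Γ | l.ker = H} with h | ⟨l₀, rfl⟩
  · exact h ▸ Set.finite_empty
  have : Finite (P ⧸ l₀.ker) :=
    (QuotientGroup.quotientKerEquivRange l₀).toEquiv.finite_iff.mpr inferInstance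
  refine Set.finite_coe_iff.mp <| Finite.of_injective
    (fun l : {l : P →* Γ | l.ker = l₀.ker} => ⇑(QuotientGroup.lift l₀.ker l.1 l.2.ge)) ?_
  exact fun l l' h => Subtype.ext <| MonoidHom.ext fun x => congrFun h x

theorem countable_setOf_continuousToDiscrete {P Γ : Type*} [Group P] [TopologicalSpace P]
    [Group Γ] [Finite Γ] [Countable {H : Subgroup P // IsOpen (H : Set P) ∧ H.Normal}] :
    {l : P →* Γ | ContinuousToDiscrete l}.Countable := by
  have hcover : {l : P →* Γ | ContinuousToDiscrete l} ⊆
      ⋃ H : {H : Subgroup P // IsOpen (H : Set P) ∧ H.Normal}, {l : P →* Γ | l.ker = H} :=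
    fun l hl => Set.mem_iUnion.mpr ⟨⟨l.ker, hl.isOpen_ker, inferInstance⟩, rfl⟩
  refine (Set.countable_iUnion fun H => ?_).mono hcover
  exact (MonoidHom.finite_setOf_ker_eq H.1).countable

theorem infinitely_many_solutions_of_embeddingProblems_solvable_general
    (P : Type u) [Group P] [TopologicalSpace P]
    (hsol : ∀ (G Γ : Type u) [Group G] [Group Γ] [Finite G] [Finite Γ]
      (α : P →* G) (f : Γ →* G), ContinuousToDiscrete α → Function.Surjective α →
      Function.Surjective f →
      ∃ l : P →* Γ, ContinuousToDiscrete l ∧ Function.Surjective l ∧ f.comp l = α) :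
    ∀ (G Γ : Type u) [Group G] [Group Γ] [Finite G] [Finite Γ]
      (α : P →* G) (f : Γ →* G), ContinuousToDiscrete α → Function.Surjective α →
      Function.Surjective f → f.ker ≠ ⊥ →
      {l : P →* Γ | ContinuousToDiscrete l ∧ Function.Surjective l ∧ f.comp l = α}.Infinite ∧
      (#{H : Subgroup P // IsOpen (H : Set P) ∧ H.Normal} = ℵ₀ →
        #{l : P →* Γ // ContinuousToDiscrete l ∧ Function.Surjective l ∧ f.comp l = α} = ℵ₀) := by
  intro G Γ _ _ _ _ α f hαc hαs hfs hker
  have hinf : {l : P →* Γ | IsProperSolution α f l}.Infinite :=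
    infinite_setOf_isProperSolution hker fun n =>
      hsol G _ α _ hαc hαs (hfs.comp (fiberProduct.eval_surjective f 0))
  refine ⟨hinf, fun hcount => ?_⟩
  have : Countable {H : Subgroup P // IsOpen (H : Set P) ∧ H.Normal} :=
    mk_le_aleph0_iff.mp hcount.le
  have : Countable {l : P →* Γ | IsProperSolution α f l} :=
    (countable_setOf_continuousToDiscrete.mono fun _ hl => hl.1).to_subtype
  have : Infinite {l : P →* Γ | IsProperSolution α f l} := hinf.to_subtype
  exact mk_eq_aleph0 {l : P →* Γ | IsProperSolution α f l}

/-- If every finite embedding problem for the profinite group `Π` has a proper solution, then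
every non-trivial finite embedding problem for `Π` has infinitely many proper solutions; and if
moreover the set of open normal subgroups of `Π` is countably infinite, then every non-trivial
finite embedding problem has exactly countably infinitely many proper solutions. -/
theorem infinitely_many_solutions_of_embeddingProblems_solvable
    (P : Type u) [Group P] [TopologicalSpace P] [IsTopologicalGroup P]
    [CompactSpace P] [T2Space P] [TotallyDisconnectedSpace P]
    (hsol : ∀ (G Γ : Type u) [Group G] [Group Γ] [Finite G] [Finite Γ]
      (α : P →* G) (f : Γ →* G), ContinuousToDiscrete α → Function.Surjective α →
      Function.Surjective f →
      ∃ l : P →* Γ, ContinuousToDiscrete l ∧ Function.Surjective l ∧ f.comp l = α) :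
    ∀ (G Γ : Type u) [Group G] [Group Γ] [Finite G] [Finite Γ]
      (α : P →* G) (f : Γ →* G), ContinuousToDiscrete α → Function.Surjective α →
      Function.Surjective f → f.ker ≠ ⊥ →
      {l : P →* Γ | ContinuousToDiscrete l ∧ Function.Surjective l ∧ f.comp l = α}.Infinite ∧
      (#{H : Subgroup P // IsOpen (H : Set P) ∧ H.Normal} = ℵ₀ →
        #{l : P →* Γ // ContinuousToDiscrete l ∧ Function.Surjective l ∧ f.comp l = α} = ℵ₀) :=
  infinitely_many_solutions_of_embeddingProblems_solvable_general P hsol
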